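/- Every partition lattice (the lattice of equivalence relations on a set X, ordered by refinement) with |X| ≥ 2 is simple and sectionally complemented, and if X is infinite or |X| ≥ 2 it has a dual atom. -/

import Mathlib

/-- A congruence of a lattice. -/
structure LatticeCon' (α : Type*) [Lattice α] where
  r : α → α → Prop
  refl : ∀ a, r a a
  symm : ∀ {a b}, r a b → r b a
  trans : ∀ {a b c}, r a b → r b c → r a c
  sup : ∀ {a b c d}, r a b → r c d → r (a ⊔ c) (b ⊔ d)
  inf : ∀ {a b c d}, r a b → r c d → r (a ⊓ c) (b ⊓ d)

/-- A lattice is simple if it has at least two elements and its only congruences are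
equality and the total relation. -/
def LatticeSimple (α : Type*) [Lattice α] : Prop :=
  (∃ a b : α, a ≠ b) ∧
    ∀ c : LatticeCon' α, c.r = (fun a b => a = b) ∨ c.r = (fun _ _ => True)

namespace PLAux

variable {X : Type*}

def sAtom (u v : X) : Setoid X where
  r a b := a = b ∨ (a = u ∧ b = v) ∨ (a = v ∧ b = u)
  iseqv := by
    constructor
    · intro a; exact Or.inl rfl
    · rintro a b (rfl | ⟨rfl, rfl⟩ | ⟨rfl, rfl⟩)
      · exact Or.inl rfl
      · exact Or.inr (Or.inr ⟨rfl, rfl⟩)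
      · exact Or.inr (Or.inl ⟨rfl, rfl⟩)
    · rintro a b c (rfl | ⟨rfl, rfl⟩ | ⟨rfl, rfl⟩) (h | ⟨h1, h2⟩ | ⟨h1, h2⟩) <;>
        subst_vars <;> tauto

lemma sAtom_rel {u v a b : X} :
    sAtom u v a b ↔ (a = b ∨ (a = u ∧ b = v) ∨ (a = v ∧ b = u)) := Iff.rfl

lemma sAtom_comm (u v : X) : sAtom u v = sAtom v u := by
  apply Setoid.ext; intro a b; simp only [sAtom_rel]; tauto

lemma sAtom_self (u : X) : sAtom u u = ⊥ := by
  apply Setoid.ext; intro a b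
  simp only [sAtom_rel]
  constructor
  · rintro (rfl | ⟨rfl, rfl⟩ | ⟨rfl, rfl⟩) <;> rfl
  · rintro rfl; exact Or.inl rfl

lemma sAtom_rel_self (u v : X) : sAtom u v u v := Or.inr (Or.inl ⟨rfl, rfl⟩)

lemma le_apply {r s : Setoid X} (h : r ≤ s) {x y : X} (hxy : r x y) : s x y := h hxy

variable (θ : LatticeCon' (Setoid X))

set_option linter.unreachableTactic false in
set_option linter.unusedTactic false in
/-- From a collapse of `⊥` with an atom, transfer to a neighbouring atom. -/
lemma sAtom_transfer {u v w : X} (huv : u ≠ v) (hwu : w ≠ u) (hwv : w ≠ v)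
    (h : θ.r ⊥ (sAtom u v)) : θ.r ⊥ (sAtom u w) := by
  have h1 : θ.r (sAtom v w) (sAtom v w ⊔ sAtom u v) := by
    have := θ.sup (θ.refl (sAtom v w)) h
    rwa [sup_bot_eq] at this
  have h2 := θ.inf h1 (θ.refl (sAtom u w))
  have eqL : sAtom v w ⊓ sAtom u w = ⊥ := by
    refine le_bot_iff.mp ?_
    intro x y hxy
    obtain ⟨ha, hb⟩ := hxy
    show x = y
    rcases ha with rfl | ⟨rfl, rfl⟩ | ⟨rfl, rfl⟩ <;>
      rcases hb with h | ⟨h1', h2'⟩ | ⟨h1', h2'⟩ <;> first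
        | rfl
        | (exact absurd h1' (by tauto))
        | (exact absurd h2' (by tauto))
        | (exact h)
        | tauto
  have eqR : (sAtom v w ⊔ sAtom u v) ⊓ sAtom u w = sAtom u w := by
    refine inf_eq_right.mpr ?_
    intro x y hxy
    have key : (sAtom v w ⊔ sAtom u v) u w :=
      (sAtom v w ⊔ sAtom u v).trans'
        (le_apply le_sup_right (sAtom_rel_self u v))
        (le_apply le_sup_left (sAtom_rel_self v w))
    rcases hxy with rfl | ⟨hx, hy⟩ | ⟨hx, hy⟩
    · exact (sAtom v w ⊔ sAtom u v).refl' _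
    · rw [hx, hy]; exact key
    · rw [hx, hy]; exact (sAtom v w ⊔ sAtom u v).symm' key
  rwa [eqL, eqR] at h2

/-- If a congruence collapses two distinct partitions, it collapses `⊥` with every atom. -/
lemma atom_collapse (h : ∃ a b : Setoid X, θ.r a b ∧ a ≠ b) :
    ∀ u v : X, u ≠ v → θ.r ⊥ (sAtom u v) := by
  obtain ⟨a, b, hab, hne⟩ := h
  -- find p < q with θ.r p q
  obtain ⟨p, q, hle, hne2, hθ⟩ : ∃ p q : Setoid X, p ≤ q ∧ p ≠ q ∧ θ.r p q := by
    by_cases h' : a = a ⊔ b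
    · refine ⟨b, a ⊔ b, le_sup_right, ?_, ?_⟩
      · intro e; exact hne (by rw [h', ← e])
      · have := θ.sup hab (θ.refl b)
        rw [sup_idem] at this
        exact θ.symm this
    · refine ⟨a, a ⊔ b, le_sup_left, h', ?_⟩
      have := θ.sup (θ.refl a) hab
      rwa [sup_idem] at this
  have hnle : ¬ q ≤ p := fun hqp => hne2 (le_antisymm hle hqp)
  have hex : ∃ u v : X, q u v ∧ ¬ p u v := by
    by_contra hc
    push_neg at hc
    exact hnle (Setoid.le_def.mpr (fun {u v} h => hc u v h))
  obtain ⟨u, v, huv, hnp⟩ := hex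
  have hune : u ≠ v := fun e => hnp (e ▸ p.refl' u)
  have h2 := θ.inf hθ (θ.refl (sAtom u v))
  have eqL : p ⊓ sAtom u v = ⊥ := by
    refine le_bot_iff.mp ?_
    intro x y hxy
    obtain ⟨hp, hat⟩ := hxy
    show x = y
    rcases hat with rfl | ⟨rfl, rfl⟩ | ⟨rfl, rfl⟩
    · rfl
    · exact absurd hp hnp
    · exact absurd (p.symm' hp) hnp
  have eqR : q ⊓ sAtom u v = sAtom u v := by
    refine inf_eq_right.mpr ?_
    intro x y hxy
    rcases hxy with rfl | ⟨hx, hy⟩ | ⟨hx, hy⟩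
    · exact q.refl' _
    · rw [hx, hy]; exact huv
    · rw [hx, hy]; exact q.symm' huv
  rw [eqL, eqR] at h2
  -- now transfer to all atoms
  intro x y hxy
  have step1 : ∃ w, w ≠ x ∧ θ.r ⊥ (sAtom x w) := by
    by_cases hxu : x = u
    · subst hxu; exact ⟨v, fun e => hune e.symm, h2⟩
    · by_cases hxv : x = v
      · subst hxv
        rw [sAtom_comm] at h2
        exact ⟨u, fun e => hune e, h2⟩
      · have := sAtom_transfer θ hune hxu hxv h2
        rw [sAtom_comm] at this
        exact ⟨u, fun e => hxu e.symm, this⟩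
  obtain ⟨w, hwx, hw⟩ := step1
  by_cases hyw : y = w
  · subst hyw; exact hw
  · exact sAtom_transfer θ (fun e => hwx e.symm) (fun e => hxy e.symm) hyw hw

/-- Any `e` whose classes are 2-colored is collapsed with `⊥`. -/
lemma bicolor (hats : ∀ u v : X, u ≠ v → θ.r ⊥ (sAtom u v)) (f : X → Bool) (e : Setoid X)
    (he : ∀ x y : X, e x y → x ≠ y → f x ≠ f y)
    (x y : X) (hf : f x ≠ f y) : θ.r ⊥ e := by
  have hxy : x ≠ y := fun h => hf (h ▸ rfl)
  set d : Setoid X := Setoid.ker f with hd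
  have hdtop : d ⊔ sAtom x y = ⊤ := by
    rw [Setoid.eq_top_iff]
    intro a b
    have hx : ∀ a : X, (d ⊔ sAtom x y) a x := by
      intro a
      by_cases hfa : f a = f x
      · exact le_apply le_sup_left (show f a = f x from hfa)
      · have hkey : ∀ p q r : Bool, p ≠ q → r ≠ q → p = r := by decide
        have hfa2 : f a = f y := hkey (f a) (f x) (f y) hfa (fun h => hf h.symm)
        exact (d ⊔ sAtom x y).trans'
          (le_apply le_sup_left (show f a = f y from hfa2))
          (le_apply le_sup_right (show sAtom x y y x from Or.inr (Or.inr ⟨rfl, rfl⟩)))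
    exact (d ⊔ sAtom x y).trans' (hx a) ((d ⊔ sAtom x y).symm' (hx b))
  have h1 : θ.r d ⊤ := by
    have := θ.sup (θ.refl d) (hats x y hxy)
    rwa [sup_bot_eq, hdtop] at this
  have h2 := θ.inf h1 (θ.refl e)
  have hde : d ⊓ e = ⊥ := by
    refine le_bot_iff.mp ?_
    intro a b hab
    obtain ⟨h1', h2'⟩ := hab
    show a = b
    by_contra hne
    exact he a b h2' hne h1'
  rwa [hde, top_inf_eq] at h2

/-- Finite case: the congruence collapses `⊥` and `⊤`. -/
lemma bot_top_of_finite [Finite X] (hats : ∀ u v : X, u ≠ v → θ.r ⊥ (sAtom u v))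
    (x₀ : X) : θ.r ⊥ ⊤ := by
  classical
  cases nonempty_fintype X
  set g : X → Setoid X := fun y => sAtom x₀ y with hg
  have hgD : ∀ y, θ.r ⊥ (g y) := by
    intro y
    by_cases h : y = x₀
    · subst h; show θ.r ⊥ (sAtom y y); rw [sAtom_self]; exact θ.refl ⊥
    · exact hats x₀ y (fun e => h e.symm)
  have hT : θ.r ⊥ (Finset.univ.sup g) := by
    refine Finset.sup_induction (θ.refl ⊥) ?_ (fun y _ => hgD y)
    intro a ha b hb
    have := θ.sup ha hb
    rwa [sup_idem] at this
  have hTtop : Finset.univ.sup g = ⊤ := by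
    rw [Setoid.eq_top_iff]
    intro a b
    have h : ∀ a : X, (Finset.univ.sup g) x₀ a := fun a =>
      le_apply (Finset.le_sup (Finset.mem_univ a)) (sAtom_rel_self x₀ a)
    exact (Finset.univ.sup g).trans' ((Finset.univ.sup g).symm' (h a)) (h b)
  rwa [hTtop] at hT

section Infinite

variable [DecidableEq X] (z : X)

/-- Number of leading `z`'s of a list. -/
def zc : List X → ℕ
  | [] => 0
  | a :: t => if a = z then zc t + 1 else 0

@[simp] lemma zc_nil : zc z ([] : List X) = 0 := rfl

@[simp] lemma zc_cons (t : List X) : zc z (z :: t) = zc z t + 1 := by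
  simp [zc]

/-- Sibling relation on lists: equal, or both nonempty with the same tail. -/
def sibS : Setoid (List X) where
  r l₁ l₂ := l₁ = l₂ ∨ ∃ a b t, l₁ = a :: t ∧ l₂ = b :: t
  iseqv := by
    constructor
    · intro l; exact Or.inl rfl
    · rintro l₁ l₂ (rfl | ⟨a, b, t, rfl, rfl⟩)
      · exact Or.inl rfl
      · exact Or.inr ⟨b, a, t, rfl, rfl⟩
    · rintro l₁ l₂ l₃ hA hB
      rcases hA with rfl | ⟨a, b, t, e1, e2⟩
      · exact hB
      rcases hB with rfl | ⟨a', b', t', f1, f2⟩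
      · exact Or.inr ⟨a, b, t, e1, e2⟩
      · rw [e2] at f1
        injection f1 with _ ht
        exact Or.inr ⟨a, b', t, e1, by rw [f2, ← ht]⟩

/-- Same-head relation on lists. -/
def headS : Setoid (List X) where
  r l₁ l₂ := l₁ = l₂ ∨ ∃ a t₁ t₂, l₁ = a :: t₁ ∧ l₂ = a :: t₂
  iseqv := by
    constructor
    · intro l; exact Or.inl rfl
    · rintro l₁ l₂ (rfl | ⟨a, t₁, t₂, rfl, rfl⟩)
      · exact Or.inl rfl
      · exact Or.inr ⟨a, t₂, t₁, rfl, rfl⟩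
    · rintro l₁ l₂ l₃ hA hB
      rcases hA with rfl | ⟨a, t₁, t₂, e1, e2⟩
      · exact hB
      rcases hB with rfl | ⟨a', t₁', t₂', f1, f2⟩
      · exact Or.inr ⟨a, t₁, t₂, e1, e2⟩
      · rw [e2] at f1
        injection f1 with ha _
        exact Or.inr ⟨a, t₁, t₂', e1, by rw [f2, ← ha]⟩

/-- Partial matching: `l ~ z :: l` when the number of leading `z`'s of `l` has
parity given by `b`. -/
def mS (b : Bool) : Setoid (List X) where
  r l₁ l₂ := l₁ = l₂ ∨ (l₂ = z :: l₁ ∧ (Even (zc z l₁) ↔ b = true)) ∨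
    (l₁ = z :: l₂ ∧ (Even (zc z l₂) ↔ b = true))
  iseqv := by
    constructor
    · intro l; exact Or.inl rfl
    · rintro l₁ l₂ (rfl | h | h)
      · exact Or.inl rfl
      · exact Or.inr (Or.inr h)
      · exact Or.inr (Or.inl h)
    · rintro l₁ l₂ l₃ hA hB
      rcases hA with rfl | ⟨e1, h1⟩ | ⟨e1, h1⟩
      · exact hB
      · rcases hB with rfl | ⟨e2, h2⟩ | ⟨e2, h2⟩
        · exact Or.inr (Or.inl ⟨e1, h1⟩)
        · exfalso
          rw [e1, zc_cons, Nat.even_add_one] at h2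
          tauto
        · have he := e1.symm.trans e2
          simp only [List.cons.injEq, true_and] at he
          exact Or.inl he
      · rcases hB with rfl | ⟨e2, h2⟩ | ⟨e2, h2⟩
        · exact Or.inr (Or.inr ⟨e1, h1⟩)
        · exact Or.inl (e1.trans e2.symm)
        · exfalso
          rw [e2, zc_cons, Nat.even_add_one] at h1
          tauto

end Infinite

/-- Infinite case: the congruence collapses `⊥` and `⊤`. -/
lemma bot_top_of_infinite [Infinite X]
    (hats : ∀ u v : X, u ≠ v → θ.r ⊥ (sAtom u v)) : θ.r ⊥ ⊤ := by
  classical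
  obtain ⟨ψ⟩ : Nonempty (X ≃ List X) := Cardinal.eq.mp (Cardinal.mk_list_eq_mk X).symm
  obtain ⟨z⟩ : Nonempty X := inferInstance
  set C : Setoid X := Setoid.comap ψ sibS with hC
  set C' : Setoid X := Setoid.comap ψ headS with hC'
  set M : Bool → Setoid X := fun b => Setoid.comap ψ (mS z b) with hMdef
  set M' : Setoid X := M true ⊔ M false with hM'def
  set pb : X → Bool := fun x => decide (Even (zc z (ψ x))) with hpb
  -- the two matchings are bicolored by parity, hence collapsed with ⊥
  have hM : ∀ b, θ.r ⊥ (M b) := by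
    intro b
    refine bicolor θ hats pb (M b) ?_ (ψ.symm []) (ψ.symm [z]) ?_
    · intro p q hpq hne
      have hψne : ψ p ≠ ψ q := fun h => hne (ψ.injective h)
      have hpar : ¬ (Even (zc z (ψ p)) ↔ Even (zc z (ψ q))) := by
        rcases hpq with h | ⟨h2, hev⟩ | ⟨h2, hev⟩
        · exact absurd h hψne
        · rw [h2, zc_cons, Nat.even_add_one]; tauto
        · rw [h2, zc_cons, Nat.even_add_one]; tauto
      intro hcontra
      rw [hpb] at hcontra
      simp only [decide_eq_decide] at hcontra
      exact hpar hcontra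
    · rw [hpb]
      simp only [Equiv.apply_symm_apply]
      simp [Nat.even_add_one]
  have hM' : θ.r ⊥ M' := by
    have := θ.sup (hM true) (hM false)
    rwa [sup_idem] at this
  -- single matching step
  have step : ∀ t : List X, M' (ψ.symm (z :: t)) (ψ.symm t) := by
    intro t
    by_cases hev : Even (zc z t)
    · refine le_apply le_sup_left ?_
      show mS z true (ψ (ψ.symm (z :: t))) (ψ (ψ.symm t))
      rw [Equiv.apply_symm_apply, Equiv.apply_symm_apply]
      exact Or.inr (Or.inr ⟨rfl, by simpa using hev⟩)
    · refine le_apply le_sup_right ?_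
      show mS z false (ψ (ψ.symm (z :: t))) (ψ (ψ.symm t))
      rw [Equiv.apply_symm_apply, Equiv.apply_symm_apply]
      exact Or.inr (Or.inr ⟨rfl, by simp [hev]⟩)
  -- C' ⊔ M' = ⊤
  have hC'top : C' ⊔ M' = ⊤ := by
    rw [Setoid.eq_top_iff]
    intro p q
    have hstep : ∀ p : X, (C' ⊔ M') p (ψ.symm (z :: ψ p)) := by
      intro p
      have h := step (ψ p)
      rw [Equiv.symm_apply_apply] at h
      exact le_apply le_sup_right (M'.symm' h)
    have hmid : C' (ψ.symm (z :: ψ p)) (ψ.symm (z :: ψ q)) := by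
      show headS (ψ (ψ.symm (z :: ψ p))) (ψ (ψ.symm (z :: ψ q)))
      rw [Equiv.apply_symm_apply, Equiv.apply_symm_apply]
      exact Or.inr ⟨z, ψ p, ψ q, rfl, rfl⟩
    exact (C' ⊔ M').trans' (hstep p)
      ((C' ⊔ M').trans' (le_apply le_sup_left hmid) ((C' ⊔ M').symm' (hstep q)))
  have hC'θ : θ.r C' ⊤ := by
    have := θ.sup (θ.refl C') hM'
    rwa [sup_bot_eq, hC'top] at this
  -- C' ⊓ C = ⊥
  have hCC' : C' ⊓ C = ⊥ := by
    refine le_bot_iff.mp ?_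
    intro p q hpq
    obtain ⟨h1, h2⟩ := hpq
    show p = q
    apply ψ.injective
    rcases h1 with he | ⟨a, t₁, t₂, e1, e2⟩
    · exact he
    rcases h2 with he | ⟨a', b', t, f1, f2⟩
    · exact he
    rw [e1, e2]
    rw [e1] at f1; rw [e2] at f2
    simp only [List.cons.injEq] at f1 f2
    rw [f1.2, f2.2]
  have hCθ : θ.r ⊥ C := by
    have := θ.inf hC'θ (θ.refl C)
    rwa [hCC', top_inf_eq] at this
  -- C ⊔ M' = ⊤
  have hCtop : C ⊔ M' = ⊤ := by
    rw [Setoid.eq_top_iff]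
    intro p q
    have haux : ∀ l : List X, (C ⊔ M') (ψ.symm l) (ψ.symm ([] : List X)) := by
      intro l
      induction l with
      | nil => exact (C ⊔ M').refl' _
      | cons a t ih =>
        have h1 : C (ψ.symm (a :: t)) (ψ.symm (z :: t)) := by
          show sibS (ψ (ψ.symm (a :: t))) (ψ (ψ.symm (z :: t)))
          rw [Equiv.apply_symm_apply, Equiv.apply_symm_apply]
          exact Or.inr ⟨a, z, t, rfl, rfl⟩
        exact (C ⊔ M').trans' (le_apply le_sup_left h1)
          ((C ⊔ M').trans' (le_apply le_sup_right (step t)) ih)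
    have hp : ∀ p : X, (C ⊔ M') p (ψ.symm ([] : List X)) := by
      intro p
      have := haux (ψ p)
      rwa [Equiv.symm_apply_apply] at this
    exact (C ⊔ M').trans' (hp p) ((C ⊔ M').symm' (hp q))
  have := θ.sup hCθ hM'
  rwa [sup_idem, hCtop] at this

/-- A congruence of the partition lattice that collapses two distinct elements is total. -/
lemma con_total (hX : ∃ x y : X, x ≠ y) (h : ∃ a b : Setoid X, θ.r a b ∧ a ≠ b) :
    ∀ a b : Setoid X, θ.r a b := by
  have hats := atom_collapse θ h
  obtain ⟨x₀, y₀, hxy⟩ := hX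
  have hbt : θ.r ⊥ ⊤ := by
    rcases finite_or_infinite X with hfin | hinf
    · exact bot_top_of_finite θ hats x₀
    · exact bot_top_of_infinite θ hats
  have ha : ∀ a : Setoid X, θ.r a ⊤ := by
    intro a
    have := θ.sup (θ.refl a) hbt
    rwa [sup_bot_eq, sup_top_eq] at this
  intro a b
  exact θ.trans (ha a) (θ.symm (ha b))

/-- The partition lattice is sectionally complemented. -/
lemma sect_comp (a b : Setoid X) (hba : b ≤ a) :
    ∃ c : Setoid X, c ≤ a ∧ b ⊓ c = ⊥ ∧ b ⊔ c = a := by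
  classical
  -- choose a representative of each `b`-class
  set f : X → X := fun x => (Quotient.mk b x).out with hf
  have hbf : ∀ x, b (f x) x := fun x => Quotient.exact (Quotient.out_eq _)
  have hff : ∀ x y, b x y → f x = f y := fun x y h => by
    simp only [hf]
    rw [Quotient.sound h]
  have hfix : ∀ x, f (f x) = f x := fun x => hff _ _ (hbf x)
  set c : Setoid X := ⟨fun x y => x = y ∨ (a x y ∧ f x = x ∧ f y = y), by
    constructor
    · intro x; exact Or.inl rfl
    · rintro x y (rfl | ⟨h1, h2, h3⟩)
      · exact Or.inl rfl
      · exact Or.inr ⟨a.symm' h1, h3, h2⟩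
    · rintro x y zz (rfl | ⟨h1, h2, h3⟩) (h | ⟨h1', h2', h3'⟩)
      · exact Or.inl h
      · exact Or.inr ⟨h1', h2', h3'⟩
      · exact Or.inr ⟨h ▸ h1, h2, h ▸ h3⟩
      · exact Or.inr ⟨a.trans' h1 h1', h2, h3'⟩⟩ with hc
  refine ⟨c, ?_, ?_, ?_⟩
  · -- c ≤ a
    rintro x y (rfl | ⟨h1, _, _⟩)
    · exact a.refl' x
    · exact h1
  · -- b ⊓ c = ⊥
    refine le_bot_iff.mp ?_
    rintro x y ⟨hb, rfl | ⟨_, h2, h3⟩⟩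
    · rfl
    · show x = y
      rw [← h2, ← h3]
      exact hff x y hb
  · -- b ⊔ c = a
    refine le_antisymm (sup_le hba ?_) ?_
    · rintro x y (rfl | ⟨h1, _, _⟩)
      · exact a.refl' x
      · exact h1
    · intro x y hxy
      have h1 : b x (f x) := b.symm' (hbf x)
      have h2 : b (f y) y := hbf y
      have hc' : c (f x) (f y) := by
        by_cases he : f x = f y
        · exact Or.inl he
        · refine Or.inr ⟨?_, hfix x, hfix y⟩
          have hax : a x (f x) := hba h1
          have hay : a (f y) y := hba h2
          exact a.trans' (a.symm' hax) (a.trans' hxy (a.symm' hay))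
      exact (b ⊔ c).trans' (le_apply le_sup_left h1)
        ((b ⊔ c).trans' (le_apply le_sup_right hc')
          (le_apply le_sup_left h2))

/-- A two-block partition is a coatom. -/
lemma exists_coatom (hX : ∃ x y : X, x ≠ y) : ∃ d : Setoid X, IsCoatom d := by
  obtain ⟨x, y, hxy⟩ := hX
  set d : Setoid X := ⟨fun a b => ((a = x) ↔ (b = x)), by
    constructor
    · intro a; exact Iff.rfl
    · intro a b h; exact h.symm
    · intro a b c h1 h2; exact h1.trans h2⟩ with hd
  refine ⟨d, ?_, ?_⟩
  · -- d ≠ ⊤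
    intro h
    have : d x y := by rw [h]; trivial
    exact hxy.symm ((show (x = x) ↔ (y = x) from this).mp rfl)
  · -- any strictly bigger is ⊤
    intro t hlt
    have hnle : ¬ t ≤ d := hlt.2
    have hex : ∃ p q : X, t p q ∧ ¬ d p q := by
      by_contra hc
      push_neg at hc
      exact hnle (Setoid.le_def.mpr (fun {p q} h => hc p q h))
    obtain ⟨p, q, htpq, hnd⟩ := hex
    -- wlog p = x and q ≠ x
    have hmain : ∀ p q : X, t p q → p = x → q ≠ x → t = ⊤ := by
      intro p q htpq hp hq
      subst hp
      rw [Setoid.eq_top_iff]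
      have hall : ∀ a : X, t p a := by
        intro a
        by_cases ha : a = p
        · rw [ha]
        · have hdq : d a q := by
            show (a = p) ↔ (q = p)
            constructor
            · intro h; exact absurd h ha
            · intro h; exact absurd h hq
          have : t a q := hlt.1 hdq
          exact t.trans' htpq (t.symm' this)
      intro a b
      exact t.trans' (t.symm' (hall a)) (hall b)
    have hcases : (p = x ∧ q ≠ x) ∨ (q = x ∧ p ≠ x) := by
      rcases Classical.em (p = x) with hp | hp
      · rcases Classical.em (q = x) with hq | hq
        · exact absurd (show (p = x) ↔ (q = x) from iff_of_true hp hq) hnd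
        · exact Or.inl ⟨hp, hq⟩
      · rcases Classical.em (q = x) with hq | hq
        · exact Or.inr ⟨hq, hp⟩
        · exact absurd (show (p = x) ↔ (q = x) from iff_of_false hp hq) hnd
    rcases hcases with ⟨h1, h2⟩ | ⟨h1, h2⟩
    · exact hmain p q htpq h1 h2
    · exact hmain q p (t.symm' htpq) h1 h2

end PLAux

/-- The partition lattice of equivalence relations on a set with at least two elements
is simple and sectionally complemented, and has a dual atom. -/
theorem partition_lattice_simple_sectionally_complemented
    (X : Type*) (hX : ∃ x y : X, x ≠ y) :
    LatticeSimple (Setoid X) ∧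
      (∀ a b : Setoid X, b ≤ a → ∃ c : Setoid X, c ≤ a ∧ b ⊓ c = ⊥ ∧ b ⊔ c = a) ∧
      (∃ d : Setoid X, IsCoatom d) := by
  refine ⟨⟨?_, ?_⟩, ?_, ?_⟩
  · obtain ⟨x, y, hxy⟩ := hX
    refine ⟨⊥, ⊤, ?_⟩
    intro h
    have hle : (⊤ : Setoid X) ≤ ⊥ := le_of_eq h.symm
    exact hxy (hle trivial)
  · intro c
    by_cases h : ∀ a b : Setoid X, c.r a b → a = b
    · left
      funext a b
      exact propext ⟨h a b, fun e => e ▸ c.refl a⟩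
    · right
      push_neg at h
      obtain ⟨a, b, hab, hne⟩ := h
      have htot := PLAux.con_total c hX ⟨a, b, hab, hne⟩
      funext p q
      exact propext ⟨fun _ => trivial, fun _ => htot p q⟩
  · intro a b hba
    exact PLAux.sect_comp a b hba
  · exact PLAux.exists_coatom hX
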